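/- arXiv:2108.12158 — 2 statements merged into one kernel-verified Lean document; each statement's English description precedes it below -/
import Mathlib

section
/- For a commutative associative algebra A and every r ≥ 0, the inclusions Der_r ⊆ Dif_r ⊆ dif_r hold, where Der_r, Dif_r, dif_r are respectively the spaces of derivations of order ≤ r, inductively defined differential operators of order ≤ r, and maps with vanishing (r+1)-fold iterated commutators with left multiplications. -/
/-- The deviations `Φ^n_∇`, arguments as `ℕ → A` on indices `0,…,n-1`. -/
def Phi {A : Type*} [NonUnitalCommRing A] (D : A → A) : ℕ → (ℕ → A) → A
  | 0, _ => 0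
  | 1, a => D (a 0)
  | (n+2), a =>
      Phi D (n+1) (Function.update a n (a n * a (n+1)))
        - Phi D (n+1) a * a (n+1)
        - Phi D (n+1) (Function.update a n (a (n+1))) * a n

/-- Left multiplication operator `L_a`. -/
def Lmul {A : Type*} [NonUnitalCommRing A] (a : A) : A → A := fun x => a * x

/-- Commutator of endomorphisms `[f,g] = f∘g − g∘f`. -/
def opComm {A : Type*} [NonUnitalCommRing A] (f g : A → A) : A → A :=
  fun x => f (g x) - g (f x)

/-- `Ψ^n_∇(a₁,…,a_n) = [⋯[[∇,L_{a₁}],L_{a₂}],…,L_{a_n}]`, arguments as `ℕ → A`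
on indices `0,…,n-1`. -/
def Psi {A : Type*} [NonUnitalCommRing A] (D : A → A) : ℕ → (ℕ → A) → A → A
  | 0, _ => D
  | (n+1), a => opComm (Psi D n a) (Lmul (a n))

/-- `Der r` = derivations of order `≤ r`: maps with identically vanishing
`(r+1)`-st deviation. -/
def Der {A : Type*} [NonUnitalCommRing A] (r : ℕ) : Set (A → A) :=
  {D | ∀ a : ℕ → A, Phi D (r + 1) a = 0}

/-- Differential operators, with a shifted index: `Dif (r+1)` is the space `Dif_r`
of the paper, and `Dif 0 = Dif_{-1} = {0}`.  `Dif_0` consists of the left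
multiplications, and `Dif_r = {∇ | [∇,L_a] ∈ Dif_{r-1} for all a}`. -/
def Dif {A : Type*} [NonUnitalCommRing A] : ℕ → Set (A → A)
  | 0 => {f | f = 0}
  | 1 => {f | ∃ a : A, f = Lmul a}
  | (n+2) => {f | ∀ a : A, opComm f (Lmul a) ∈ Dif (n+1)}

/-- `dif r` = maps whose `(r+1)`-fold iterated commutator with left multiplications
vanishes identically. -/
def dif {A : Type*} [NonUnitalCommRing A] (r : ℕ) : Set (A → A) :=
  {D | ∀ a : ℕ → A, Psi D (r + 1) a = 0}

section Aux

variable {A : Type*} [NonUnitalCommRing A]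

/-- The modified commutator `δ_b D = [D, L_b] − L_{D b}`. -/
def delt (b : A) (D : A → A) : A → A := fun x => D (b * x) - b * D x - D b * x

lemma Phi_succ (D : A → A) (n : ℕ) (a : ℕ → A) :
    Phi D (n+2) a = Phi D (n+1) (Function.update a n (a n * a (n+1)))
        - Phi D (n+1) a * a (n+1)
        - Phi D (n+1) (Function.update a n (a (n+1))) * a n := rfl

/-- `Phi D n` only depends on the arguments at indices `< n`. -/
lemma Phi_congr (D : A → A) :
    ∀ (n : ℕ) (a b : ℕ → A), (∀ i, i < n → a i = b i) → Phi D n a = Phi D n b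
  | 0, _, _, _ => rfl
  | 1, a, b, h => by simp only [Phi, h 0 (by norm_num)]
  | (n+2), a, b, h => by
      simp only [Phi]
      rw [Phi_congr D (n+1) (Function.update a n (a n * a (n+1)))
            (Function.update b n (b n * b (n+1)))
            (by
              intro i hi
              rcases eq_or_ne i n with rfl | hne
              · simp [h i (by omega), h (i+1) (by omega)]
              · simp [Function.update_of_ne hne, h i (by omega)]),
          Phi_congr D (n+1) a b (fun i hi => h i (by omega)),
          Phi_congr D (n+1) (Function.update a n (a (n+1)))
            (Function.update b n (b (n+1)))
            (by
              intro i hi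
              rcases eq_or_ne i n with rfl | hne
              · simp [h (i+1) (by omega)]
              · simp [Function.update_of_ne hne, h i (by omega)]),
          h n (by omega), h (n+1) (by omega)]

/-- `Phi` is compatible with linear combinations in the operator argument. -/
lemma Phi_comb :
    ∀ (n : ℕ) (E F G : A → A) (d c : A) (a : ℕ → A),
      Phi (fun x => E x - F x * d - G x * c) n a
        = Phi E n a - Phi F n a * d - Phi G n a * c
  | 0, E, F, G, d, c, a => by simp [Phi]
  | 1, E, F, G, d, c, a => by simp [Phi]
  | (n+2), E, F, G, d, c, a => by
      simp only [Phi]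
      rw [Phi_comb (n+1) E F G d c, Phi_comb (n+1) E F G d c, Phi_comb (n+1) E F G d c]
      simp only [mul_add, add_mul, mul_sub, sub_mul]
      simp only [mul_comm, mul_left_comm, mul_assoc]
      abel

lemma delt_delt (c d : A) (D : A → A) :
    delt c (delt d D) = fun x => delt (c * d) D x - delt c D x * d - delt d D x * c := by
  funext x
  simp only [delt]
  rw [show d * (c * x) = c * d * x by rw [mul_left_comm, mul_assoc],
      show d * c = c * d from mul_comm d c]
  simp only [mul_add, add_mul, mul_sub, sub_mul]
  simp only [mul_comm, mul_left_comm, mul_assoc]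
  abel

/-- The key recursion: the `(n+2)`-nd deviation of `D` is the `(n+1)`-st
deviation of `δ_{a_{n+1}} D`. -/
lemma phi_delt : ∀ (n : ℕ) (D : A → A) (a : ℕ → A),
    Phi D (n+2) a = Phi (delt (a (n+1)) D) (n+1) a
  | 0, D, a => by
      simp only [Phi, delt, Function.update_self]
      rw [show a 1 * a 0 = a 0 * a 1 from mul_comm _ _, mul_comm (a 1) (D (a 0))]
  | (n+1), D, a => by
      rw [Phi_succ D (n+1) a,
          phi_delt n D (Function.update a (n+1) (a (n+1) * a (n+2))),
          phi_delt n D a,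
          phi_delt n D (Function.update a (n+1) (a (n+2))),
          phi_delt n (delt (a (n+2)) D) a]
      simp only [Function.update_self]
      rw [Phi_congr (delt (a (n+1) * a (n+2)) D) (n+1)
            (Function.update a (n+1) (a (n+1) * a (n+2))) a
            (fun i hi => Function.update_of_ne (by omega) _ _),
          Phi_congr (delt (a (n+2)) D) (n+1)
            (Function.update a (n+1) (a (n+2))) a
            (fun i hi => Function.update_of_ne (by omega) _ _),
          ← Phi_comb (n+1) (delt (a (n+1) * a (n+2)) D) (delt (a (n+1)) D)
            (delt (a (n+2)) D) (a (n+2)) (a (n+1)) a,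
          ← delt_delt (a (n+1)) (a (n+2)) D]

/-- `δ_b` lowers the order of derivations. -/
lemma delt_mem_Der {r : ℕ} {D : A → A} (hD : D ∈ Der (r+1)) (b : A) :
    delt b D ∈ Der r := by
  intro a
  have h1 := phi_delt r D (Function.update a (r+1) b)
  rw [hD (Function.update a (r+1) b), Function.update_self,
      Phi_congr (delt b D) (r+1) (Function.update a (r+1) b) a
        (fun i hi => Function.update_of_ne (by omega) _ _)] at h1
  exact h1.symm

/-- `Dif (n+1)` is stable under adding a left multiplication. -/
lemma Dif_add_lmul : ∀ (n : ℕ) (f : A → A) (c : A), f ∈ Dif (n+1) →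
    (fun x => f x + c * x) ∈ Dif (n+1)
  | 0, f, c, hf => by
      obtain ⟨b, rfl⟩ := hf
      exact ⟨b + c, funext fun x => by simp [Lmul, add_mul]⟩
  | (n+1), f, c, hf => by
      intro b
      have h : opComm (fun x => f x + c * x) (Lmul b) = opComm f (Lmul b) := by
        funext x
        simp only [opComm, Lmul]
        rw [mul_left_comm c b x, mul_add b]
        abel
      rw [h]
      exact hf b

lemma der_subset_dif' : ∀ (r : ℕ), Der (A := A) r ⊆ Dif (r + 1)
  | 0 => by
      intro D hD
      refine ⟨0, funext fun x => ?_⟩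
      have h := hD (fun _ => x)
      simp only [Phi] at h
      simp [Lmul, h]
  | (r+1) => by
      intro D hD b
      have h1 : delt b D ∈ Dif (r+1) := der_subset_dif' r (delt_mem_Der hD b)
      have h2 : opComm D (Lmul b) = fun x => delt b D x + D b * x := by
        funext x
        simp only [opComm, Lmul, delt]
        abel
      rw [h2]
      exact Dif_add_lmul r (delt b D) (D b) h1

lemma psi_shift : ∀ (n : ℕ) (D : A → A) (a : ℕ → A),
    Psi D (n+1) a = Psi (opComm D (Lmul (a 0))) n (fun i => a (i+1))
  | 0, D, a => rfl
  | (n+1), D, a => by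
      show opComm (Psi D (n+1) a) (Lmul (a (n+1))) = _
      rw [psi_shift n D a]
      rfl

lemma dif_subset_dif' : ∀ (r : ℕ), Dif (A := A) (r + 1) ⊆ dif r
  | 0 => by
      rintro D ⟨b, rfl⟩ a
      funext x
      show Lmul b (Lmul (a 0) x) - Lmul (a 0) (Lmul b x) = 0
      simp only [Lmul]
      rw [mul_left_comm, sub_self]
  | (r+1) => by
      intro D hD a
      rw [psi_shift]
      exact dif_subset_dif' r (hD (a 0)) (fun i => a (i+1))

end Aux

/-- `Der_r ⊆ Dif_r ⊆ dif_r` for every `r ≥ 0`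
(index shift: `Dif (r+1)` is the paper's `Dif_r`). -/
theorem stmt11 {A : Type*} [NonUnitalCommRing A] (r : ℕ) :
    Der (A := A) r ⊆ Dif (r + 1) ∧ Dif (A := A) (r + 1) ⊆ dif (A := A) r := by
  exact ⟨der_subset_dif' r, dif_subset_dif' r⟩
end

section
/- Let A be a commutative associative algebra and [−,−] : A ⊗ A → A a bilinear bracket satisfying the Jacobi identity. If ad_b := [b, −] is a differential operator of order ≤ s for all b ∈ A (for various s), then the Jacobiator expression can be rewritten as Jac(a,b,c) = ±(ad_{[b,c]}(a) + [ad_b, ad_c](a)); consequently, if [−,−]_s and [−,−]_t are bilinear maps, each a differential operator of order ≤ s (resp. ≤ t) in each variable, then Jac_n(a,b,c) := Σ_{s+t=n+1}([a,[b,c]_s]_t + [b,[c,a]_s]_t + [c,[a,b]_s]_t) is a differential operator of order ≤ n in each of its three variables. -/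
/-- The `n`-th Jacobiator of a family of brackets:
`Jac_n(a,b,c) = Σ_{s+t=n+1, s,t≥1} ([a,[b,c]_s]_t + [b,[c,a]_s]_t + [c,[a,b]_s]_t)`. -/
def Jacn {k A : Type*} [Field k] [CommRing A] [Algebra k A]
    (br : ℕ → A →ₗ[k] A →ₗ[k] A) (n : ℕ) (x y z : A) : A :=
  ∑ s ∈ Finset.Icc 1 n,
    (br (n + 1 - s) x (br s y z) + br (n + 1 - s) y (br s z x)
      + br (n + 1 - s) z (br s x y))

section Helpers

variable {A : Type*} [CommRing A]

/-- `δ_b D = [D, L_b]`. -/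
def dl (b : A) (D : A → A) : A → A := fun x => D (b * x) - b * D x

lemma dl_apply (b : A) (D : A → A) (x : A) : dl b D x = D (b * x) - b * D x := rfl

lemma Psi_succ (D : A → A) (n : ℕ) (a : ℕ → A) :
    Psi D (n+1) a = dl (a n) (Psi D n a) := rfl

lemma mem_dif (r : ℕ) (D : A → A) : D ∈ dif r ↔ ∀ a : ℕ → A, Psi D (r+1) a = 0 :=
  Iff.rfl

lemma Psi_dl (D : A → A) (b : A) (n : ℕ) (a : ℕ → A) :
    Psi (dl b D) n a = Psi D (n+1) (fun i => Nat.casesOn i b a) := by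
  induction n with
  | zero => rfl
  | succ n ih =>
    rw [Psi_succ, ih]
    rfl

lemma mem_dif_succ (r : ℕ) (D : A → A) :
    D ∈ dif (r+1) ↔ ∀ b : A, dl b D ∈ dif r := by
  constructor
  · intro h b a
    rw [Psi_dl]
    exact h _
  · intro h a
    have h2 := h (a 0) (fun i => a (i+1))
    rw [Psi_dl] at h2
    have ha : (fun i => Nat.casesOn i (a 0) (fun j => a (j+1)) : ℕ → A) = a := by
      funext i; cases i <;> rfl
    rw [ha] at h2
    exact h2

lemma mem_dif_zero (D : A → A) :
    D ∈ dif 0 ↔ ∀ b : A, dl b D = 0 := by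
  constructor
  · intro h b
    exact h (fun _ => b)
  · intro h a
    exact h (a 0)

lemma dl_zero (b : A) : dl b (0 : A → A) = 0 := by
  funext x; simp [dl]

lemma Psi_zero_fun (n : ℕ) (a : ℕ → A) : Psi (0 : A → A) n a = 0 := by
  induction n with
  | zero => rfl
  | succ n ih => rw [Psi_succ, ih, dl_zero]

lemma dif_zero_mem (r : ℕ) : (0 : A → A) ∈ dif r := fun a => Psi_zero_fun _ _

lemma dif_zero_mem' (r : ℕ) : (fun _ : A => (0:A)) ∈ dif r := dif_zero_mem r

lemma Psi_add (f g : A → A) (n : ℕ) (a : ℕ → A) :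
    Psi (fun x => f x + g x) n a = fun x => Psi f n a x + Psi g n a x := by
  induction n with
  | zero => rfl
  | succ n ih =>
    rw [Psi_succ, Psi_succ, Psi_succ, ih]
    funext x
    simp only [dl]
    ring

lemma dif_add {r : ℕ} {f g : A → A} (hf : f ∈ dif r) (hg : g ∈ dif r) :
    (fun x => f x + g x) ∈ dif r := by
  intro a
  rw [Psi_add, hf a, hg a]
  funext x; simp

lemma Psi_neg (f : A → A) (n : ℕ) (a : ℕ → A) :
    Psi (fun x => -(f x)) n a = fun x => -(Psi f n a x) := by
  induction n with
  | zero => rfl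
  | succ n ih =>
    rw [Psi_succ, Psi_succ, ih]
    funext x
    simp only [dl]
    ring

lemma dif_neg_mem {r : ℕ} {f : A → A} (hf : f ∈ dif r) :
    (fun x => -(f x)) ∈ dif r := by
  intro a
  rw [Psi_neg, hf a]
  funext x; simp

lemma dif_sum {r : ℕ} {ι : Type*} (S : Finset ι) (F : ι → A → A)
    (h : ∀ i ∈ S, F i ∈ dif r) :
    (fun x => ∑ i ∈ S, F i x) ∈ dif r := by
  classical
  induction S using Finset.induction_on with
  | empty => simpa using dif_zero_mem' r
  | @insert a S hni ih =>
    simp only [Finset.sum_insert hni]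
    exact dif_add (h a (Finset.mem_insert_self a S))
      (ih fun i hi => h i (Finset.mem_insert_of_mem hi))

lemma dif_le_succ {r : ℕ} {D : A → A} (h : D ∈ dif r) : D ∈ dif (r+1) := by
  intro a
  rw [Psi_succ, h a, dl_zero]

lemma dif_mono {r s : ℕ} (hrs : r ≤ s) {D : A → A} (h : D ∈ dif r) : D ∈ dif s := by
  induction hrs with
  | refl => exact h
  | step _ ih => exact dif_le_succ ih

lemma additive_zero {f : A → A} (hf : ∀ x y, f (x+y) = f x + f y) : f 0 = 0 := by
  have h := hf 0 0
  simp only [add_zero] at h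
  exact left_eq_add.mp h

lemma additive_sub {f : A → A} (hf : ∀ x y, f (x+y) = f x + f y) (u v : A) :
    f (u - v) = f u - f v := by
  have h : f (u - v + v) = f (u-v) + f v := hf _ _
  rw [sub_add_cancel] at h
  exact eq_sub_of_add_eq h.symm

lemma dl_additive {b : A} {f : A → A} (hf : ∀ x y, f (x+y) = f x + f y) :
    ∀ x y, dl b f (x+y) = dl b f x + dl b f y := by
  intro x y
  simp only [dl, mul_add, hf]
  ring

lemma dl_comp (b : A) (f g : A → A) (hf : ∀ x y, f (x+y) = f x + f y) :
    dl b (fun x => f (g x)) = fun x => f (dl b g x) + dl b f (g x) := by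
  funext x
  simp only [dl]
  rw [additive_sub hf]
  ring

lemma dl_comm_eq (b : A) (f g : A → A) (hf : ∀ x y, f (x+y) = f x + f y)
    (hg : ∀ x y, g (x+y) = g x + g y) :
    dl b (fun x => f (g x) - g (f x))
      = fun x => (f (dl b g x) - dl b g (f x)) + (dl b f (g x) - g (dl b f x)) := by
  funext x
  simp only [dl]
  rw [additive_sub hf, additive_sub hg]
  ring

lemma dif0_apply {h : A → A} (hh : h ∈ dif 0) (t : A) : h t = h 1 * t := by
  have := congrFun ((mem_dif_zero h).mp hh t) 1
  simp only [dl, mul_one, Pi.zero_apply] at this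
  linear_combination this

end Helpers
section Part2
variable {A : Type*} [CommRing A]

/-- `[f,h] ∈ dif m` for `f ∈ dif (m+1)`, `h ∈ dif 0` (unital case: `h` is a
multiplication operator). -/
lemma dl_comm_dif0 (b : A) (f h : A → A) (hf : ∀ x y, f (x+y) = f x + f y)
    (hh : h ∈ dif 0) :
    dl b (fun x => f (h x) - h (f x))
      = fun x => dl b f (h x) - h (dl b f x) := by
  have hh' := dif0_apply hh
  funext x
  simp only [dl]
  rw [hh' (b*x), hh' x, hh' (f (b*x) - b * f x), hh' (f x), hh' (f (b*x))]
  rw [show h 1 * (b * x) = b * (h 1 * x) by ring]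
  ring

lemma dif_comm0 : ∀ (m : ℕ) (f h : A → A), (∀ x y, f (x+y) = f x + f y) →
    f ∈ dif (m+1) → h ∈ dif 0 → (fun x => f (h x) - h (f x)) ∈ dif m := by
  intro m
  induction m with
  | zero =>
    intro f h hf hfd hh
    rw [mem_dif_zero]
    intro b
    rw [dl_comm_dif0 b f h hf hh]
    have hg : dl b f ∈ dif 0 := (mem_dif_succ 0 f).mp hfd b
    funext x
    rw [dif0_apply hg (h x), dif0_apply hh (dl b f x), dif0_apply hh x,
      dif0_apply hg x]
    simp only [Pi.zero_apply]
    ring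
  | succ m ih =>
    intro f h hf hfd hh
    rw [mem_dif_succ]
    intro b
    rw [dl_comm_dif0 b f h hf hh]
    exact ih (dl b f) h (dl_additive hf) ((mem_dif_succ _ f).mp hfd b) hh

lemma dif_comp : ∀ (K m n : ℕ) (f g : A → A), m + n = K →
    (∀ x y, f (x+y) = f x + f y) → (∀ x y, g (x+y) = g x + g y) →
    f ∈ dif m → g ∈ dif n → (fun x => f (g x)) ∈ dif K := by
  intro K
  induction K using Nat.strong_induction_on with
  | _ K ih =>
  intro m n f g hK hf hg hfm hgn
  cases K with
  | zero =>
    have hm : m = 0 := by omega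
    have hn : n = 0 := by omega
    subst hm; subst hn
    rw [mem_dif_zero]
    intro b
    rw [dl_comp b f g hf, (mem_dif_zero g).mp hgn b, (mem_dif_zero f).mp hfm b]
    funext x
    simp [additive_zero hf]
  | succ K' =>
    rw [mem_dif_succ]
    intro b
    rw [dl_comp b f g hf]
    apply dif_add
    · -- fun x => f (dl b g x)
      cases n with
      | zero =>
        rw [(mem_dif_zero g).mp hgn b]
        have : (fun x => f ((0 : A → A) x)) = (fun _ : A => (0:A)) := by
          funext x; simp [additive_zero hf]
        rw [this]
        exact dif_zero_mem' K'
      | succ n' =>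
        have h1 := ih K' (by omega) m n' f (dl b g) (by omega) hf
          (dl_additive hg) hfm ((mem_dif_succ _ g).mp hgn b)
        exact h1
    · -- fun x => dl b f (g x)
      cases m with
      | zero =>
        rw [(mem_dif_zero f).mp hfm b]
        have : (fun x => (0 : A → A) (g x)) = (fun _ : A => (0:A)) := by
          funext x; simp
        rw [this]
        exact dif_zero_mem' K'
      | succ m' =>
        exact ih K' (by omega) m' n (dl b f) g (by omega) (dl_additive hf)
          hg ((mem_dif_succ _ f).mp hfm b) hgn

lemma dif_comm : ∀ (K m n : ℕ) (f g : A → A), m + n = K →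
    (∀ x y, f (x+y) = f x + f y) → (∀ x y, g (x+y) = g x + g y) →
    f ∈ dif (m+1) → g ∈ dif (n+1) →
    (fun x => f (g x) - g (f x)) ∈ dif (K+1) := by
  intro K
  induction K using Nat.strong_induction_on with
  | _ K ih =>
  intro m n f g hK hf hg hfm hgn
  rw [mem_dif_succ]
  intro b
  rw [dl_comm_eq b f g hf hg]
  apply dif_add
  · -- fun x => f (dl b g x) - dl b g (f x)
    have hdg : dl b g ∈ dif n := (mem_dif_succ _ g).mp hgn b
    cases n with
    | zero =>
      have h1 := dif_comm0 m f (dl b g) hf hfm hdg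
      have e : m = K := by omega
      rw [← e]
      exact h1
    | succ n' =>
      have h1 := ih (m + n') (by omega) m n' f (dl b g) rfl hf
        (dl_additive hg) hfm hdg
      have e : m + n' + 1 = K := by omega
      rw [← e]
      exact h1
  · -- fun x => dl b f (g x) - g (dl b f x)
    have hdf : dl b f ∈ dif m := (mem_dif_succ _ f).mp hfm b
    cases m with
    | zero =>
      have h1 := dif_neg_mem (dif_comm0 n g (dl b f) hg hgn hdf)
      have efun : (fun x => dl b f (g x) - g (dl b f x))
          = fun x => -((fun x => g (dl b f x) - dl b f (g x)) x) := by
        funext x; ring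
      rw [efun]
      have e : n = K := by omega
      rw [← e]
      exact h1
    | succ m' =>
      have h1 := ih (m' + n) (by omega) m' n (dl b f) g rfl (dl_additive hf)
        hg hdf hgn
      have e : m' + n + 1 = K := by omega
      rw [← e]
      exact h1

lemma Icc_reflect (n : ℕ) (F : ℕ → A) :
    ∑ s ∈ Finset.Icc 1 n, F s = ∑ s ∈ Finset.Icc 1 n, F (n+1-s) := by
  refine Finset.sum_nbij' (fun s => n+1-s) (fun s => n+1-s) ?_ ?_ ?_ ?_ ?_ <;>
    intro a ha <;> simp only [Finset.mem_Icc] at ha ⊢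
  · omega
  · omega
  · omega
  · omega
  · congr 1; omega

end Part2

/-- for an antisymmetric bracket `B` satisfying the Jacobi identity
whose adjoint maps are differential operators, the Jacobiator rewrites as
`Jac(a,b,c) = −ad_{[b,c]}(a) + [ad_b, ad_c](a)`; consequently, for a family of
bilinear antisymmetric brackets `[−,−]_s`, each a differential operator of order
`≤ s` in each variable, the expression `Jac_n` is a differential operator of order
`≤ n` in each of its three variables. -/
theorem stmt18 {k : Type*} [Field k] [CharZero k]
    {A : Type*} [CommRing A] [Algebra k A]
    (B : A →ₗ[k] A →ₗ[k] A)
    (hBanti : ∀ x y, B x y = -B y x)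
    (hBjac : ∀ x y z, B x (B y z) + B y (B z x) + B z (B x y) = 0)
    (hBdif : ∀ b : A, ∃ s : ℕ, (fun x => B b x) ∈ dif s)
    (br : ℕ → A →ₗ[k] A →ₗ[k] A)
    (hanti : ∀ s x y, br s x y = -br s y x)
    (h₁ : ∀ (s : ℕ) (b : A), (fun x => br s x b) ∈ dif s)
    (h₂ : ∀ (s : ℕ) (b : A), (fun x => br s b x) ∈ dif s)
    (n : ℕ) :
    (∀ x y z : A,
        B x (B y z) + B y (B z x) + B z (B x y)
          = -(B (B y z) x) + (B y (B z x) - B z (B y x))) ∧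
    (∀ y z : A, (fun x => Jacn br n x y z) ∈ dif n) ∧
    (∀ x z : A, (fun y => Jacn br n x y z) ∈ dif n) ∧
    (∀ x y : A, (fun z => Jacn br n x y z) ∈ dif n) := by
  refine ⟨?_, ?_, ?_, ?_⟩
  · intro x y z
    rw [hBanti x (B y z), show B z (B x y) = -B z (B y x) by rw [hBanti x y, map_neg]]
    abel
  · -- variable x
    intro y z
    have heq : (fun x => Jacn br n x y z) = fun x => ∑ s ∈ Finset.Icc 1 n,
        (br (n+1-s) x (br s y z)
          + (br (n+1-s) y (br s z x) - br s z (br (n+1-s) y x))) := by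
      funext x
      simp only [Jacn]
      rw [Finset.sum_add_distrib, Finset.sum_add_distrib, Finset.sum_add_distrib,
        Finset.sum_sub_distrib]
      have h3 : ∑ s ∈ Finset.Icc 1 n, br (n+1-s) z (br s x y)
          = -∑ s ∈ Finset.Icc 1 n, br s z (br (n+1-s) y x) := by
        rw [Icc_reflect n (fun s => br (n+1-s) z (br s x y)), ← Finset.sum_neg_distrib]
        apply Finset.sum_congr rfl
        intro s hs
        simp only [Finset.mem_Icc] at hs
        rw [show n+1-(n+1-s) = s by omega, hanti (n+1-s) x y, map_neg]
      rw [h3]; ring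
    rw [heq]
    apply dif_sum
    intro s hs
    rw [Finset.mem_Icc] at hs
    apply dif_add
    · exact dif_mono (by omega) (h₁ (n+1-s) (br s y z))
    · have hf : (fun w => br (n+1-s) y w) ∈ dif ((n-s)+1) := by
        rw [show (n-s)+1 = n+1-s by omega]; exact h₂ (n+1-s) y
      have hg : (fun w => br s z w) ∈ dif ((s-1)+1) := by
        rw [show (s-1)+1 = s by omega]; exact h₂ s z
      have hcomm := dif_comm ((n-s)+(s-1)) (n-s) (s-1) _ _ rfl
        (fun u v => map_add _ u v) (fun u v => map_add _ u v) hf hg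
      have e : (n-s)+(s-1)+1 = n := by omega
      rw [e] at hcomm
      exact hcomm
  · -- variable y
    intro x z
    have heq : (fun y => Jacn br n x y z) = fun y => ∑ s ∈ Finset.Icc 1 n,
        (br (n+1-s) y (br s z x)
          + (br (n+1-s) z (br s x y) - br s x (br (n+1-s) z y))) := by
      funext y
      simp only [Jacn]
      rw [Finset.sum_add_distrib, Finset.sum_add_distrib, Finset.sum_add_distrib,
        Finset.sum_sub_distrib]
      have h3 : ∑ s ∈ Finset.Icc 1 n, br (n+1-s) x (br s y z)
          = -∑ s ∈ Finset.Icc 1 n, br s x (br (n+1-s) z y) := by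
        rw [Icc_reflect n (fun s => br (n+1-s) x (br s y z)), ← Finset.sum_neg_distrib]
        apply Finset.sum_congr rfl
        intro s hs
        simp only [Finset.mem_Icc] at hs
        rw [show n+1-(n+1-s) = s by omega, hanti (n+1-s) y z, map_neg]
      rw [h3]; ring
    rw [heq]
    apply dif_sum
    intro s hs
    rw [Finset.mem_Icc] at hs
    apply dif_add
    · exact dif_mono (by omega) (h₁ (n+1-s) (br s z x))
    · have hf : (fun w => br (n+1-s) z w) ∈ dif ((n-s)+1) := by
        rw [show (n-s)+1 = n+1-s by omega]; exact h₂ (n+1-s) z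
      have hg : (fun w => br s x w) ∈ dif ((s-1)+1) := by
        rw [show (s-1)+1 = s by omega]; exact h₂ s x
      have hcomm := dif_comm ((n-s)+(s-1)) (n-s) (s-1) _ _ rfl
        (fun u v => map_add _ u v) (fun u v => map_add _ u v) hf hg
      have e : (n-s)+(s-1)+1 = n := by omega
      rw [e] at hcomm
      exact hcomm
  · -- variable z
    intro x y
    have heq : (fun z => Jacn br n x y z) = fun z => ∑ s ∈ Finset.Icc 1 n,
        (br (n+1-s) z (br s x y)
          + (br (n+1-s) x (br s y z) - br s y (br (n+1-s) x z))) := by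
      funext z
      simp only [Jacn]
      rw [Finset.sum_add_distrib, Finset.sum_add_distrib, Finset.sum_add_distrib,
        Finset.sum_sub_distrib]
      have h3 : ∑ s ∈ Finset.Icc 1 n, br (n+1-s) y (br s z x)
          = -∑ s ∈ Finset.Icc 1 n, br s y (br (n+1-s) x z) := by
        rw [Icc_reflect n (fun s => br (n+1-s) y (br s z x)), ← Finset.sum_neg_distrib]
        apply Finset.sum_congr rfl
        intro s hs
        simp only [Finset.mem_Icc] at hs
        rw [show n+1-(n+1-s) = s by omega, hanti (n+1-s) z x, map_neg]
      rw [h3]; ring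
    rw [heq]
    apply dif_sum
    intro s hs
    rw [Finset.mem_Icc] at hs
    apply dif_add
    · exact dif_mono (by omega) (h₁ (n+1-s) (br s x y))
    · have hf : (fun w => br (n+1-s) x w) ∈ dif ((n-s)+1) := by
        rw [show (n-s)+1 = n+1-s by omega]; exact h₂ (n+1-s) x
      have hg : (fun w => br s y w) ∈ dif ((s-1)+1) := by
        rw [show (s-1)+1 = s by omega]; exact h₂ s y
      have hcomm := dif_comm ((n-s)+(s-1)) (n-s) (s-1) _ _ rfl
        (fun u v => map_add _ u v) (fun u v => map_add _ u v) hf hg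
      have e : (n-s)+(s-1)+1 = n := by omega
      rw [e] at hcomm
      exact hcomm
end
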